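/- arXiv:0911.4793 — 2 statements merged into one kernel-verified Lean document; each statement's English description precedes it below -/
import Mathlib

section
/- Let $\xi_1,\dots,\xi_9$ be elements of a commutative $\mathbb{Q}$-algebra with $\sum_i \xi_i = 0$, set $s_m = \sum_{i=1}^9 \xi_i^m$, and define $I_n = \sum_{i<j}\big((\xi_i-\xi_j)^n + (\xi_j-\xi_i)^n\big) + \sum_{i<j<k}\big((\xi_i+\xi_j+\xi_k)^n + (-\xi_i-\xi_j-\xi_k)^n\big)$. Then for every even $n \ge 2$, $I_n = \sum_{i=0}^n \binom{n}{i}(-1)^{n-i} s_i s_{n-i} + 2\cdot 3^{n-1} s_n - \sum_{i=0}^n \binom{n}{i} 2^{n-i} s_i s_{n-i} + \tfrac{1}{3}\sum_{i=0}^n\sum_{j=0}^{n-i}\binom{n}{i}\binom{n-i}{j} s_i s_j s_{n-i-j}$. -/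
/-!
Every term on the right-hand side is a full (ordered) sum over indices: expanding by the binomial
theorem, `∑ C(n,i) c^(n-i) s_i s_(n-i) = ∑_{a,b} (ξ_a + c ξ_b)^n` and the double sum of trinomial
coefficients is `∑_{a,b,c} (ξ_a + ξ_b + ξ_c)^n`. On the left, the pair sum is the full sum of
`(ξ_a - ξ_b)^n` (its diagonal vanishes), and since `n` is even the triple sum is twice the sum `S` of
`(ξ_i + ξ_j + ξ_k)^n` over `i < j < k`. Counting how often each multiset of indices occurs among
ordered triples gives `∑_{a,b,c} f + 2 ∑_a f(a,a,a) = 6 S + 3 ∑_{a,b} f(a,b,b)` for symmetric `f`,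
which is the identity.
-/

open Finset

/-- Power sums `s_m = ∑_{i=1}^9 ξ_i^m`. -/
def psum {A : Type*} [CommRing A] (ξ : Fin 9 → A) (m : ℕ) : A :=
  ∑ i : Fin 9, ξ i ^ m

theorem Finset.sum_Ioi_eq_sum_Ioo_add_add_sum_Ioi {ι M : Type*} [LinearOrder ι]
    [LocallyFiniteOrder ι] [LocallyFiniteOrderTop ι] [AddCommMonoid M]
    (g : ι → M) {a c : ι} (h : a < c) :
    ∑ b ∈ Ioi a, g b = ∑ b ∈ Ioo a c, g b + g c + ∑ b ∈ Ioi c, g b := by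
  rw [← sum_filter_add_sum_filter_not (Ioi a) (· < c), add_assoc]
  congr 1
  · congr 1; ext; simp
  · rw [← sum_cons (f := g) notMem_Ioi_self, ← Ici_eq_cons_Ioi]
    congr 1; ext; simpa using fun hc ↦ h.trans_le hc

namespace Finset

variable {ι M : Type*} [Fintype ι] [LinearOrder ι] [LocallyFiniteOrderTop ι]
  [LocallyFiniteOrderBot ι] [AddCommMonoid M]

theorem sum_eq_sum_Iio_add_add_sum_Ioi (g : ι → M) (a : ι) :
    ∑ b, g b = ∑ b ∈ Iio a, g b + g a + ∑ b ∈ Ioi a, g b := by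
  rw [← sum_filter_add_sum_filter_not univ (· < a), filter_gt_eq_Iio, add_assoc]
  congr 1
  rw [← sum_cons (f := g) notMem_Ioi_self, ← Ici_eq_cons_Ioi]
  congr 1; ext; simp

theorem sum_sum_Iio_comm (g : ι → ι → M) :
    ∑ b, ∑ a ∈ Iio b, g a b = ∑ a, ∑ b ∈ Ioi a, g a b :=
  sum_comm' fun _ _ ↦ by simp

theorem sum_sum_eq_sum_sum_Ioi_add_sum_diag (g : ι → ι → M) :
    ∑ a, ∑ b, g a b = ∑ a, ∑ b ∈ Ioi a, (g a b + g b a) + ∑ a, g a a := by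
  rw [sum_congr rfl fun a _ ↦ sum_eq_sum_Iio_add_add_sum_Ioi (g a) a]
  simp only [sum_add_distrib]
  rw [sum_sum_Iio_comm]
  abel

theorem sum_sum_sum_add_two_nsmul_sum_diag [LocallyFiniteOrder ι] (f : ι → ι → ι → M)
    (hf₁ : ∀ a b c, f a b c = f b a c) (hf₂ : ∀ a b c, f a b c = f a c b) :
    ∑ a, ∑ b, ∑ c, f a b c + 2 • ∑ a, f a a a
      = 6 • ∑ a, ∑ b ∈ Ioi a, ∑ c ∈ Ioi b, f a b c + 3 • ∑ a, ∑ b, f a b b := by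
  have hinner (a : ι) : ∑ b, ∑ c, f a b c = 2 • ∑ b, ∑ c ∈ Ioi b, f a b c + ∑ b, f a b b := by
    rw [sum_sum_eq_sum_sum_Ioi_add_sum_diag, smul_sum]
    congr 1
    refine sum_congr rfl fun b _ ↦ ?_
    rw [smul_sum]
    exact sum_congr rfl fun c _ ↦ by rw [← hf₂, two_nsmul]
  -- Splitting the sum over `a` at `b < c` leaves three strict pieces, each a relabelling of the
  -- sum over `a < b < c`.
  have hlow : ∑ b, ∑ c ∈ Ioi b, ∑ a ∈ Iio b, f a b c
      = ∑ a, ∑ b ∈ Ioi a, ∑ c ∈ Ioi b, f a b c := by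
    simp_rw [sum_comm (s := Ioi _) (t := Iio _)]
    exact sum_sum_Iio_comm fun a b ↦ ∑ c ∈ Ioi b, f a b c
  have hmid : ∑ b, ∑ c ∈ Ioi b, ∑ a ∈ Ioo b c, f a b c
      = ∑ a, ∑ b ∈ Ioi a, ∑ c ∈ Ioi b, f a b c := by
    refine sum_congr rfl fun b _ ↦ ?_
    rw [sum_comm' (t' := Ioi b) (s' := Ioi) fun c a ↦ ?_]
    · exact sum_congr rfl fun a _ ↦ sum_congr rfl fun c _ ↦ hf₁ a b c
    · simp only [mem_Ioi, mem_Ioo]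
      constructor
      · rintro ⟨-, hba, hac⟩; exact ⟨hac, hba⟩
      · rintro ⟨hac, hba⟩; exact ⟨hba.trans hac, hba, hac⟩
  have hhigh : ∑ b, ∑ c ∈ Ioi b, ∑ a ∈ Ioi c, f a b c
      = ∑ a, ∑ b ∈ Ioi a, ∑ c ∈ Ioi b, f a b c :=
    sum_congr rfl fun b _ ↦ sum_congr rfl fun c _ ↦ sum_congr rfl fun a _ ↦
      (hf₁ a b c).trans (hf₂ b a c)
  have hstrict : ∑ a, ∑ b, ∑ c ∈ Ioi b, f a b c
      = 3 • ∑ a, ∑ b ∈ Ioi a, ∑ c ∈ Ioi b, f a b c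
        + ∑ a, ∑ b ∈ Ioi a, (f a b b + f b a a) :=
    calc ∑ a, ∑ b, ∑ c ∈ Ioi b, f a b c
        = ∑ b, ∑ c ∈ Ioi b, ∑ a, f a b c := by
          rw [sum_comm]; simp_rw [sum_comm (s := univ)]
      _ = ∑ b, ∑ c ∈ Ioi b, (∑ a ∈ Iio b, f a b c + f b b c + ∑ a ∈ Ioo b c, f a b c
            + f c b c + ∑ a ∈ Ioi c, f a b c) := by
          refine sum_congr rfl fun b _ ↦ sum_congr rfl fun c hc ↦ ?_
          rw [sum_eq_sum_Iio_add_add_sum_Ioi _ b,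
            sum_Ioi_eq_sum_Ioo_add_add_sum_Ioi _ (mem_Ioi.1 hc)]
          abel
      _ = _ := by
          simp only [sum_add_distrib]
          rw [hlow, hmid, hhigh,
            sum_congr rfl fun b _ ↦ sum_congr rfl fun c _ ↦ (hf₂ b b c).trans (hf₁ b c b),
            sum_congr rfl fun b _ ↦ sum_congr rfl fun c _ ↦ hf₁ c b c]
          abel
  rw [sum_congr rfl fun a _ ↦ hinner a, sum_add_distrib, ← smul_sum, hstrict,
    sum_sum_eq_sum_sum_Ioi_add_sum_diag fun a b ↦ f a b b]
  abel

end Finset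

theorem Finset.sum_sum_add_pow {R α β : Type*} [CommSemiring R] (s : Finset α) (t : Finset β)
    (x : α → R) (y : β → R) (n : ℕ) :
    ∑ a ∈ s, ∑ b ∈ t, (x a + y b) ^ n
      = ∑ i ∈ range (n + 1), (∑ a ∈ s, x a ^ i) * (∑ b ∈ t, y b ^ (n - i)) * n.choose i := by
  simp_rw [add_pow, sum_mul_sum, sum_mul]
  symm
  rw [sum_comm]
  exact sum_congr rfl fun _ _ ↦ sum_comm

section PowerSums

variable {A : Type*} [CommRing A]

theorem sum_choose_mul_pow_mul_psum_mul_psum (ξ : Fin 9 → A) (c : A) (n : ℕ) :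
    ∑ i ∈ range (n + 1), (n.choose i : A) * c ^ (n - i) * psum ξ i * psum ξ (n - i)
      = ∑ a, ∑ b, (ξ a + c * ξ b) ^ n := by
  rw [sum_sum_add_pow]
  refine sum_congr rfl fun i _ ↦ ?_
  simp_rw [psum, mul_pow, ← mul_sum]
  ring

theorem sum_choose_mul_choose_mul_psum_mul_psum_mul_psum (ξ : Fin 9 → A) (n : ℕ) :
    ∑ i ∈ range (n + 1), ∑ j ∈ range (n - i + 1),
        (n.choose i : A) * ((n - i).choose j : A) * psum ξ i * psum ξ j * psum ξ (n - i - j)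
      = ∑ a, ∑ b, ∑ c, (ξ a + ξ b + ξ c) ^ n := by
  have hpairs (m : ℕ) : ∑ p : Fin 9 × Fin 9, (ξ p.1 + ξ p.2) ^ m
      = ∑ j ∈ range (m + 1), psum ξ j * psum ξ (m - j) * m.choose j := by
    rw [Fintype.sum_prod_type, sum_sum_add_pow]; rfl
  simp_rw [add_assoc]
  rw [sum_congr rfl fun a _ ↦ (Fintype.sum_prod_type' fun b c ↦ (ξ a + (ξ b + ξ c)) ^ n).symm,
    sum_sum_add_pow]
  refine sum_congr rfl fun i _ ↦ ?_
  change _ = psum ξ i * _ * _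
  rw [hpairs, mul_sum, sum_mul]
  exact sum_congr rfl fun j _ ↦ by ring

theorem sum_sum_Ioi_sub_pow_add_sub_pow (ξ : Fin 9 → A) {n : ℕ} (hn : n ≠ 0) :
    ∑ i, ∑ j ∈ Ioi i, ((ξ i - ξ j) ^ n + (ξ j - ξ i) ^ n)
      = ∑ i ∈ range (n + 1), (n.choose i : A) * (-1) ^ (n - i) * psum ξ i * psum ξ (n - i) := by
  rw [sum_choose_mul_pow_mul_psum_mul_psum,
    sum_sum_eq_sum_sum_Ioi_add_sum_diag fun a b ↦ (ξ a + -1 * ξ b) ^ n]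
  simp [← sub_eq_add_neg, zero_pow hn]

theorem sum_sum_sum_add_pow_eq (ξ : Fin 9 → A) {n : ℕ} (hn : n ≠ 0) :
    ∑ a, ∑ b, ∑ c, (ξ a + ξ b + ξ c) ^ n
      = 3 * (2 * ∑ i, ∑ j ∈ Ioi i, ∑ k ∈ Ioi j, (ξ i + ξ j + ξ k) ^ n
        + ∑ a, ∑ b, (ξ a + ξ b + ξ b) ^ n - 2 * 3 ^ (n - 1) * psum ξ n) := by
  have hcount := sum_sum_sum_add_two_nsmul_sum_diag (fun a b c ↦ (ξ a + ξ b + ξ c) ^ n)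
    (fun _ _ _ ↦ by ring) (fun _ _ _ ↦ by ring)
  have hdiag : ∑ a, (ξ a + ξ a + ξ a) ^ n = 3 * 3 ^ (n - 1) * psum ξ n := by
    rw [← pow_succ', Nat.sub_add_cancel (Nat.one_le_iff_ne_zero.2 hn), psum, mul_sum]
    exact sum_congr rfl fun a _ ↦ by ring
  simp only [nsmul_eq_mul, Nat.cast_ofNat] at hcount
  linear_combination hcount - 2 * hdiag

end PowerSums

theorem stmt3_general {A : Type*} [CommRing A] [Algebra ℚ A] (ξ : Fin 9 → A)
    (n : ℕ) (hn : 2 ≤ n) (hne : Even n) :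
    (∑ i : Fin 9, ∑ j ∈ Finset.Ioi i, ((ξ i - ξ j) ^ n + (ξ j - ξ i) ^ n))
      + (∑ i : Fin 9, ∑ j ∈ Finset.Ioi i, ∑ k ∈ Finset.Ioi j,
          ((ξ i + ξ j + ξ k) ^ n + (-(ξ i) - ξ j - ξ k) ^ n))
    = (∑ i ∈ Finset.range (n + 1),
        (n.choose i : A) * (-1 : A) ^ (n - i) * psum ξ i * psum ξ (n - i))
      + 2 * 3 ^ (n - 1) * psum ξ n
      - (∑ i ∈ Finset.range (n + 1),
          (n.choose i : A) * 2 ^ (n - i) * psum ξ i * psum ξ (n - i))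
      + (1/3 : ℚ) • (∑ i ∈ Finset.range (n + 1), ∑ j ∈ Finset.range (n - i + 1),
          (n.choose i : A) * ((n - i).choose j : A)
            * psum ξ i * psum ξ j * psum ξ (n - i - j)) := by
  have hn₀ : n ≠ 0 := by omega
  have htriples : ∑ i : Fin 9, ∑ j ∈ Ioi i, ∑ k ∈ Ioi j,
      ((ξ i + ξ j + ξ k) ^ n + (-(ξ i) - ξ j - ξ k) ^ n)
        = 2 * ∑ i : Fin 9, ∑ j ∈ Ioi i, ∑ k ∈ Ioi j, (ξ i + ξ j + ξ k) ^ n := by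
    simp_rw [mul_sum, show ∀ i j k, -(ξ i) - ξ j - ξ k = -(ξ i + ξ j + ξ k) from
      fun _ _ _ ↦ by ring, hne.neg_pow, ← two_mul]
  have htwo : ∑ i ∈ range (n + 1), (n.choose i : A) * 2 ^ (n - i) * psum ξ i * psum ξ (n - i)
      = ∑ a, ∑ b, (ξ a + ξ b + ξ b) ^ n := by
    simp_rw [sum_choose_mul_pow_mul_psum_mul_psum, two_mul, add_assoc]
  have hthird : (1/3 : ℚ) • (3 : A) = 1 := by
    rw [Algebra.smul_def, ← map_ofNat (algebraMap ℚ A), ← map_mul]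
    norm_num
  rw [sum_sum_Ioi_sub_pow_add_sub_pow ξ hn₀, htriples, htwo,
    sum_choose_mul_choose_mul_psum_mul_psum_mul_psum, sum_sum_sum_add_pow_eq ξ hn₀,
    ← smul_mul_assoc, hthird, one_mul]
  ring

/-- For even `n ≥ 2`,
`I_n = ∑_{i<j}((ξ_i-ξ_j)^n+(ξ_j-ξ_i)^n) + ∑_{i<j<k}((ξ_i+ξ_j+ξ_k)^n+(-ξ_i-ξ_j-ξ_k)^n)`
equals the stated expression in the power sums `s_m`. -/
theorem stmt3 {A : Type*} [CommRing A] [Algebra ℚ A] (ξ : Fin 9 → A)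
    (hsum : ∑ i : Fin 9, ξ i = 0) (n : ℕ) (hn : 2 ≤ n) (hne : Even n) :
    (∑ i : Fin 9, ∑ j ∈ Finset.Ioi i, ((ξ i - ξ j) ^ n + (ξ j - ξ i) ^ n))
      + (∑ i : Fin 9, ∑ j ∈ Finset.Ioi i, ∑ k ∈ Finset.Ioi j,
          ((ξ i + ξ j + ξ k) ^ n + (-(ξ i) - ξ j - ξ k) ^ n))
    = (∑ i ∈ Finset.range (n + 1),
        (n.choose i : A) * (-1 : A) ^ (n - i) * psum ξ i * psum ξ (n - i))
      + 2 * 3 ^ (n - 1) * psum ξ n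
      - (∑ i ∈ Finset.range (n + 1),
          (n.choose i : A) * 2 ^ (n - i) * psum ξ i * psum ξ (n - i))
      + (1/3 : ℚ) • (∑ i ∈ Finset.range (n + 1), ∑ j ∈ Finset.range (n - i + 1),
          (n.choose i : A) * ((n - i).choose j : A)
            * psum ξ i * psum ξ j * psum ξ (n - i - j)) :=
  stmt3_general ξ n hn hne
end

section
/- In the quotient ring $A = \mathbb{Z}[z_{12},z_{20},z_{30}]/(2z_{30},\, 3z_{20}^2,\, 5z_{12}^4,\, z_{12}^5 + z_{20}^3 + z_{30}^2)$, the class of $z_{30}$ is nonzero and satisfies $2\,\overline{z_{30}} = 0$; that is, $\overline{z_{30}}$ has additive order exactly $2$. -/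
open MvPolynomial

/-- The ideal `(2z₃₀, 3z₂₀², 5z₁₂⁴, z₁₂⁵ + z₂₀³ + z₃₀²)` in `ℤ[z₁₂,z₂₀,z₃₀]`
(`z₁₂ = X 0`, `z₂₀ = X 1`, `z₃₀ = X 2`). -/
noncomputable def I10 : Ideal (MvPolynomial (Fin 3) ℤ) :=
  Ideal.span {2 * X (2 : Fin 3), 3 * (X (1 : Fin 3)) ^ 2, 5 * (X (0 : Fin 3)) ^ 4,
    (X (0 : Fin 3)) ^ 5 + (X (1 : Fin 3)) ^ 3 + (X (2 : Fin 3)) ^ 2}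

/-- `A = H^even(E₈/E₇; ℤ)`. -/
abbrev A10 := MvPolynomial (Fin 3) ℤ ⧸ I10

noncomputable def phi10 : MvPolynomial (Fin 3) ℤ →+* DualNumber (ZMod 2) :=
  (MvPolynomial.aeval (fun i : Fin 3 => if i = 2 then DualNumber.eps else 0)).toRingHom

lemma I10_le_ker : I10 ≤ RingHom.ker phi10 := by
  rw [I10, Ideal.span_le]
  intro p hp
  simp only [Set.mem_insert_iff, Set.mem_singleton_iff] at hp
  have h2 : (2 : DualNumber (ZMod 2)) * DualNumber.eps = 0 := by
    have h11 : ((1 : ZMod 2) + 1) = 0 := by decide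
    rw [two_mul, DualNumber.eps, ← TrivSqZeroExt.inr_add, h11, TrivSqZeroExt.inr_zero]
  rcases hp with h | h | h | h <;> subst h <;>
    simp [phi10, RingHom.mem_ker, DualNumber.eps_mul_eps, sq, h2]

lemma X2_not_mem : X (2 : Fin 3) ∉ I10 := by
  intro h
  have := I10_le_ker h
  rw [RingHom.mem_ker] at this
  simp [phi10] at this
  have := congrArg TrivSqZeroExt.snd this
  simp [DualNumber.snd_eps] at this

/-- In `A`, the class of `z₃₀` is nonzero, is killed by `2`, and has additive
order exactly `2`. -/
theorem stmt10 :
    (Ideal.Quotient.mk I10 (X (2 : Fin 3)) ≠ 0) ∧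
    (2 * Ideal.Quotient.mk I10 (X (2 : Fin 3)) = 0) ∧
    addOrderOf (Ideal.Quotient.mk I10 (X (2 : Fin 3))) = 2 := by
  have h1 : Ideal.Quotient.mk I10 (X (2 : Fin 3)) ≠ 0 := by
    intro h
    exact X2_not_mem (Ideal.Quotient.eq_zero_iff_mem.mp h)
  have h2 : 2 * Ideal.Quotient.mk I10 (X (2 : Fin 3)) = 0 := by
    rw [← map_ofNat (Ideal.Quotient.mk I10) 2, ← map_mul]
    apply Ideal.Quotient.eq_zero_iff_mem.mpr
    apply Ideal.subset_span
    simp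
  refine ⟨h1, h2, ?_⟩
  haveI : Fact (Nat.Prime 2) := ⟨Nat.prime_two⟩
  apply addOrderOf_eq_prime
  · rw [two_smul, ← two_mul, h2]
  · exact h1
end
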